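/- Let n ≥ 2 and m ≥ 2 be integers, let μ > 0, R > 0 and let L satisfy L/μ ≥ 2. Set α = √( 2(L/μ − 1)/n + 1 ), q = (α − 1)/(α + 1), and define f_SC : ℝ^m → ℝ by f_SC(x) = ((L − μ)/(4n)) ( Σ_{l=1}^{m−1} (x_l − x_{l+1})² + (2/(α+1)) x_m² ) + (μ/2)‖x‖² − μ R √α · x_1. Then for every 1 ≤ k ≤ m − 1, inf{ f_SC(x) : x ∈ F_k, ‖x‖ ≤ R } − inf{ f_SC(x) : ‖x‖ ≤ R } ≥ ( μ R² α/(α + 1) ) · q^{2k}. -/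

import Mathlib

/-!
In the coordinates `x_1, …, x_m`, `f_SC` is a tridiagonal quadratic (`chainEnergy` below, indices
shifted to start at `0`). Any sequence satisfying its discrete Euler–Lagrange equations is a
global minimiser, with value `-b u₀ / 2` where `b = μR√α`, by completing the square. The interior
equation has characteristic roots `q` and `q⁻¹`: the minimiser over `ℝ^m` is `R √α (1 - q) qⁱ`,
which lies in the ball of radius `R`, and the minimiser over `F_k` is the combination of `qⁱ` and
`q⁻ⁱ` vanishing at index `k`. Comparing the two values gives the gap
`μR²α/(α+1) · q^{2k} (1 + q)/(1 + q^{2k+1})`.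
-/

open scoped BigOperators

/-- `F_k = span{e_1, …, e_k} ⊆ ℝ^m` (so `F_0 = {0}`). -/
def Fspan (m k : ℕ) : Submodule ℝ (EuclideanSpace ℝ (Fin m)) :=
  Submodule.span ℝ {v | ∃ j : Fin m, (j : ℕ) < k ∧ v = EuclideanSpace.single j 1}

open Finset

noncomputable def chainEnergy (c w μ b : ℝ) (N : ℕ) (y : ℕ → ℝ) : ℝ :=
  c * ∑ i ∈ range N, (y i - y (i + 1)) ^ 2 + w * y N ^ 2
    + μ / 2 * ∑ i ∈ range (N + 1), y i ^ 2 - b * y 0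

/-- The Euler–Lagrange equations of `chainEnergy c w μ b N`, written with a ghost value `u (N + 1)`
so that the equation at the last node has the same shape as the interior ones. -/
structure IsChainCritical (c w μ b : ℝ) (N : ℕ) (u : ℕ → ℝ) : Prop where
  first : μ * u 0 - b = 2 * c * (u 1 - u 0)
  step : ∀ i < N, 2 * c * (2 * u (i + 1) - u i - u (i + 2)) + μ * u (i + 1) = 0
  last : w * u N + c * (u (N + 1) - u N) = 0

section Chain

variable {c w μ b : ℝ} {N : ℕ} {u : ℕ → ℝ}

theorem chainEnergy_nonneg (hc : 0 ≤ c) (hw : 0 ≤ w) (hμ : 0 ≤ μ) (y : ℕ → ℝ) :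
    0 ≤ chainEnergy c w μ 0 N y := by
  unfold chainEnergy
  simp only [zero_mul, sub_zero]
  positivity

@[simp]
theorem chainEnergy_zero : chainEnergy c w μ b N 0 = 0 := by
  simp [chainEnergy]

theorem chainEnergy_congr {y z : ℕ → ℝ} (h : ∀ i ≤ N, y i = z i) :
    chainEnergy c w μ b N y = chainEnergy c w μ b N z := by
  have hdiff : ∑ i ∈ range N, (y i - y (i + 1)) ^ 2 = ∑ i ∈ range N, (z i - z (i + 1)) ^ 2 :=
    sum_congr rfl fun i hi => by
      rw [h i (mem_range.mp hi).le, h (i + 1) (mem_range.mp hi)]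
  have hsq : ∑ i ∈ range (N + 1), y i ^ 2 = ∑ i ∈ range (N + 1), z i ^ 2 :=
    sum_congr rfl fun i hi => by rw [h i (Nat.lt_succ_iff.mp (mem_range.mp hi))]
  unfold chainEnergy
  rw [hdiff, hsq, h N le_rfl, h 0 (Nat.zero_le _)]

theorem chainEnergy_of_forall_gt_eq_zero {K : ℕ} (hKN : K < N) {y : ℕ → ℝ}
    (hy : ∀ i, K < i → y i = 0) :
    chainEnergy c w μ b N y = chainEnergy c c μ b K y := by
  have hdiff : ∑ i ∈ range N, (y i - y (i + 1)) ^ 2 = ∑ i ∈ range (K + 1), (y i - y (i + 1)) ^ 2 :=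
    (sum_subset (range_subset_range.mpr hKN) fun i _ hi => by
      have hKi : K < i := not_lt.mp (mt mem_range.mpr hi)
      rw [hy i hKi, hy (i + 1) (by omega)]; ring).symm
  have hsq : ∑ i ∈ range (N + 1), y i ^ 2 = ∑ i ∈ range (K + 1), y i ^ 2 :=
    (sum_subset (range_subset_range.mpr (by omega)) fun i _ hi => by
      rw [hy i (not_lt.mp (mt mem_range.mpr hi))]; ring).symm
  unfold chainEnergy
  rw [hdiff, hsq, sum_range_succ, hy N hKN, hy (K + 1) (by omega)]
  ring

/-- The left side is the first variation of `chainEnergy` at `u` in the direction `h`; summation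
by parts turns its vanishing into the Euler–Lagrange equations. -/
theorem IsChainCritical.cross (hu : IsChainCritical c w μ b N u) (h : ℕ → ℝ) :
    2 * c * ∑ i ∈ range N, (h i - h (i + 1)) * (u i - u (i + 1)) + 2 * w * (h N * u N)
      + μ * ∑ i ∈ range (N + 1), h i * u i = b * h 0 := by
  have partial_sum : ∀ n ≤ N, 2 * c * ∑ i ∈ range n, (h i - h (i + 1)) * (u i - u (i + 1))
      + μ * ∑ i ∈ range (n + 1), h i * u i - b * h 0 = 2 * c * (u (n + 1) - u n) * h n := by
    intro n hn
    induction n with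
    | zero =>
      simp only [range_zero, sum_empty, sum_range_one, mul_zero, zero_add]
      linear_combination h 0 * hu.first
    | succ n ih =>
      rw [sum_range_succ, sum_range_succ (fun i => h i * u i) (n + 1)]
      linear_combination ih (by omega) + h (n + 1) * hu.step n (by omega)
  linear_combination partial_sum N le_rfl + 2 * h N * hu.last

theorem IsChainCritical.chainEnergy_eq (hu : IsChainCritical c w μ b N u) (y : ℕ → ℝ) :
    chainEnergy c w μ b N y = chainEnergy c w μ 0 N (y - u) - b * u 0 / 2 := by
  have hyu := hu.cross (y - u)
  have huu := hu.cross u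
  have hdiff : ∑ i ∈ range N, (y i - y (i + 1)) ^ 2
      = ∑ i ∈ range N, ((y - u) i - (y - u) (i + 1)) ^ 2
        + 2 * ∑ i ∈ range N, ((y - u) i - (y - u) (i + 1)) * (u i - u (i + 1))
        + ∑ i ∈ range N, (u i - u (i + 1)) * (u i - u (i + 1)) := by
    rw [mul_sum, ← sum_add_distrib, ← sum_add_distrib]
    exact sum_congr rfl fun i _ => by simp only [Pi.sub_apply]; ring
  have hsq : ∑ i ∈ range (N + 1), y i ^ 2
      = ∑ i ∈ range (N + 1), (y - u) i ^ 2 + 2 * ∑ i ∈ range (N + 1), (y - u) i * u i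
        + ∑ i ∈ range (N + 1), u i * u i := by
    rw [mul_sum, ← sum_add_distrib, ← sum_add_distrib]
    exact sum_congr rfl fun i _ => by simp only [Pi.sub_apply]; ring
  simp only [chainEnergy, Pi.sub_apply] at *
  linear_combination c * hdiff + μ / 2 * hsq + hyu + huu / 2

theorem IsChainCritical.chainEnergy_self (hu : IsChainCritical c w μ b N u) :
    chainEnergy c w μ b N u = -(b * u 0) / 2 := by
  rw [hu.chainEnergy_eq, sub_self, chainEnergy_zero]
  ring

theorem IsChainCritical.le_chainEnergy (hu : IsChainCritical c w μ b N u)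
    (hc : 0 ≤ c) (hw : 0 ≤ w) (hμ : 0 ≤ μ) (y : ℕ → ℝ) :
    -(b * u 0) / 2 ≤ chainEnergy c w μ b N y := by
  rw [hu.chainEnergy_eq]
  linarith [chainEnergy_nonneg (N := N) hc hw hμ (y - u)]

end Chain

section Geometric

variable {c μ b q : ℝ}

theorem pow_chain_step {ρ : ℝ} (hc : 2 * c * (1 - ρ) ^ 2 = μ * ρ) (i : ℕ) :
    2 * c * (2 * ρ ^ (i + 1) - ρ ^ i - ρ ^ (i + 2)) + μ * ρ ^ (i + 1) = 0 := by
  linear_combination (-ρ ^ i) * hc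

theorem isChainCritical_geom {w : ℝ} (hμ : μ ≠ 0) (hc : 2 * c * (1 - q) ^ 2 = μ * q)
    (hw : w = c * (1 - q)) (N : ℕ) :
    IsChainCritical c w μ b N (fun i => b * (1 - q) / μ * q ^ i) where
  first := by
    field_simp
    linear_combination b * hc
  step i _ := by linear_combination b * (1 - q) / μ * pow_chain_step hc i
  last := by rw [hw]; ring

/-- The amplitude is fixed by the equation at node `0`, and the `q⁻¹` part cancels the `q` part at
the ghost node `N + 1`. -/
theorem isChainCritical_twoSided (hμ : μ ≠ 0) (hq : q ≠ 0) (hq1 : q ≠ 1)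
    (hc : 2 * c * (1 - q) ^ 2 = μ * q) (N : ℕ) (hd : 1 + q ^ (2 * N + 3) ≠ 0) :
    IsChainCritical c c μ b N (fun i =>
      b * (1 - q) / (μ * (1 + q ^ (2 * N + 3))) * (q ^ i - q ^ (2 * N + 2) * q⁻¹ ^ i)) where
  first := by
    have h1q : 1 - q ≠ 0 := sub_ne_zero.mpr (Ne.symm hq1)
    rw [show c = μ * q / (2 * (1 - q) ^ 2) by field_simp; linear_combination hc]
    field_simp
    ring
  step i _ := by
    have hc' : 2 * c * (1 - q⁻¹) ^ 2 = μ * q⁻¹ := by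
      field_simp
      linear_combination hc
    linear_combination b * (1 - q) / (μ * (1 + q ^ (2 * N + 3))) *
      (pow_chain_step hc i - q ^ (2 * N + 2) * pow_chain_step hc' i)
  last := by
    have hvanish : q ^ (N + 1) - q ^ (2 * N + 2) * q⁻¹ ^ (N + 1) = 0 := by
      rw [show q ^ (2 * N + 2) = q ^ (N + 1) * q ^ (N + 1) by ring, mul_assoc, ← mul_pow,
        mul_inv_cancel₀ hq, one_pow, mul_one, sub_self]
    linear_combination b * (1 - q) / (μ * (1 + q ^ (2 * N + 3))) * c * hvanish

end Geometric

theorem cayley_of_one_lt {α q : ℝ} (hα : 1 < α) (hq : q = (α - 1) / (α + 1)) :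
    0 < q ∧ q < 1 ∧ α = (1 + q) / (1 - q) := by
  have hα1 : 0 < α + 1 := by linarith
  have hq1 : q < 1 := hq ▸ (div_lt_one hα1).mpr (by linarith)
  refine ⟨hq ▸ div_pos (by linarith) hα1, hq1, ?_⟩
  rw [eq_div_iff (by linarith), hq]
  field_simp
  ring

theorem twoSided_value_gap {μ b q : ℝ} (hμ : 0 < μ) (hq0 : 0 ≤ q) (hq1 : q < 1) (N : ℕ) :
    b ^ 2 * (1 - q) / (2 * μ) * q ^ (2 * N + 2)
      ≤ b * (b * (1 - q) / μ) / 2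
        - b * (b * (1 - q) / (μ * (1 + q ^ (2 * N + 3))) * (1 - q ^ (2 * N + 2))) / 2 := by
  set Q := q ^ (2 * N + 2)
  have hQ0 : 0 ≤ Q := by positivity
  have hQ1 : Q ≤ 1 := pow_le_one₀ hq0 hq1.le
  have hqQ : q ^ (2 * N + 3) = q * Q := by rw [pow_succ]; ring
  have hd : 0 < 1 + q * Q := by positivity
  have hdiff : b * (b * (1 - q) / μ) / 2
        - b * (b * (1 - q) / (μ * (1 + q * Q)) * (1 - Q)) / 2
        - b ^ 2 * (1 - q) / (2 * μ) * Q
      = b ^ 2 * (1 - q) * Q * q * (1 - Q) / (2 * μ * (1 + q * Q)) := by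
    field_simp
    ring
  have hnonneg : 0 ≤ b ^ 2 * (1 - q) * Q * q * (1 - Q) / (2 * μ * (1 + q * Q)) := by
    have : 0 ≤ 1 - q := by linarith
    have : 0 ≤ 1 - Q := by linarith
    positivity
  rw [hqQ]
  linarith

theorem hardInstance_scale {μ R α q : ℝ} (hq1 : q < 1) (hα : α = (1 + q) / (1 - q)) (hα0 : 0 ≤ α) :
    μ * R ^ 2 * α / (α + 1) = (μ * R * √α) ^ 2 * (1 - q) / (2 * μ) := by
  have h1q : 1 - q ≠ 0 := by linarith
  have hα1 : α + 1 = 2 / (1 - q) := by rw [hα]; field_simp; ring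
  rw [mul_pow, mul_pow, Real.sq_sqrt hα0, hα1]
  rcases eq_or_ne μ 0 with rfl | hμ
  · simp
  · field_simp

theorem hardInstance_params {n L μ α q : ℝ} (hn : 0 < n) (hμ : 0 < μ) (hL : 1 < L / μ)
    (hα : α = √(2 * (L / μ - 1) / n + 1)) (hq : q = (α - 1) / (α + 1)) :
    0 < q ∧ q < 1 ∧ α = (1 + q) / (1 - q) ∧ 2 * ((L - μ) / (4 * n)) * (1 - q) ^ 2 = μ * q := by
  have hX : 0 < 2 * (L / μ - 1) / n := div_pos (by linarith) hn
  have hαsq : α ^ 2 = 2 * (L / μ - 1) / n + 1 := by rw [hα, Real.sq_sqrt (by linarith)]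
  obtain ⟨hq0, hq1, hαq⟩ :=
    cayley_of_one_lt (hα ▸ (Real.lt_sqrt zero_le_one).mpr (by linarith)) hq
  refine ⟨hq0, hq1, hαq, ?_⟩
  have h1q : 1 - q ≠ 0 := by linarith
  have hc : (L - μ) / (4 * n) = μ * (α ^ 2 - 1) / 8 := by
    rw [hαsq]; field_simp; ring
  rw [hc, hαq]
  field_simp
  ring

def coordSeq {m : ℕ} (x : EuclideanSpace ℝ (Fin m)) (i : ℕ) : ℝ :=
  if h : i < m then x ⟨i, h⟩ else 0

section Coord

variable {m : ℕ}

theorem coordSeq_of_lt (x : EuclideanSpace ℝ (Fin m)) {i : ℕ} (h : i < m) :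
    coordSeq x i = x ⟨i, h⟩ := dif_pos h

theorem coordSeq_toLp (u : ℕ → ℝ) {i : ℕ} (h : i < m) :
    coordSeq (WithLp.toLp 2 (fun j : Fin m => u j)) i = u i := dif_pos h

theorem norm_sq_eq_sum_coordSeq (x : EuclideanSpace ℝ (Fin m)) :
    ‖x‖ ^ 2 = ∑ i ∈ range m, coordSeq x i ^ 2 := by
  rw [EuclideanSpace.real_norm_sq_eq, ← Fin.sum_univ_eq_sum_range]
  exact sum_congr rfl fun i _ => by rw [coordSeq_of_lt x i.isLt]

theorem coordSeq_eq_zero_of_mem_Fspan {k : ℕ} {x : EuclideanSpace ℝ (Fin m)} (hx : x ∈ Fspan m k)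
    {i : ℕ} (hi : k ≤ i) : coordSeq x i = 0 := by
  unfold coordSeq
  split_ifs with him
  · induction hx using Submodule.span_induction with
    | mem v hv =>
      obtain ⟨j, hj, rfl⟩ := hv
      rw [PiLp.single_apply, if_neg (Fin.ne_of_val_ne (by simp; omega))]
    | zero => rfl
    | add v w _ _ hv hw => simp [hv, hw]
    | smul a v _ hv => simp [hv]
  · rfl

theorem hardInstance_eq_chainEnergy (hm : 1 ≤ m) (a w μ b : ℝ) (x : EuclideanSpace ℝ (Fin m)) :
    a * ((∑ l : Fin (m - 1),
            (x (Fin.castLE (by omega) l) - x (Fin.cast (by omega : m - 1 + 1 = m) l.succ)) ^ 2)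
          + w * (x ⟨m - 1, by omega⟩) ^ 2)
      + (μ / 2) * ‖x‖ ^ 2 - b * x ⟨0, by omega⟩
      = chainEnergy a (a * w) μ b (m - 1) (coordSeq x) := by
  have hdiff : ∑ l : Fin (m - 1),
      (x (Fin.castLE (by omega) l) - x (Fin.cast (by omega : m - 1 + 1 = m) l.succ)) ^ 2
        = ∑ i ∈ range (m - 1), (coordSeq x i - coordSeq x (i + 1)) ^ 2 := by
    rw [← Fin.sum_univ_eq_sum_range]
    exact sum_congr rfl fun l _ => by
      rw [coordSeq_of_lt x (by omega), coordSeq_of_lt x (by omega)]; rfl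
  rw [hdiff, norm_sq_eq_sum_coordSeq, ← coordSeq_of_lt x (by omega),
    ← coordSeq_of_lt x (by omega), chainEnergy, Nat.sub_add_cancel hm]
  ring

theorem norm_sq_toLp_geom_le {D q : ℝ} (hq0 : 0 ≤ q) (hq1 : q < 1) :
    ‖WithLp.toLp 2 (fun j : Fin m => D * q ^ (j : ℕ))‖ ^ 2 ≤ D ^ 2 / (1 - q ^ 2) := by
  rw [norm_sq_eq_sum_coordSeq]
  have hgeom : ∑ i ∈ range m, (q ^ 2) ^ i ≤ 1 / (1 - q ^ 2) := by
    simpa using geom_sum_Ico_le_of_lt_one (m := 0) (n := m) (sq_nonneg q) (by nlinarith)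
  calc ∑ i ∈ range m, coordSeq (WithLp.toLp 2 (fun j : Fin m => D * q ^ (j : ℕ))) i ^ 2
      = D ^ 2 * ∑ i ∈ range m, (q ^ 2) ^ i := by
        rw [mul_sum]
        exact sum_congr rfl fun i hi => by
          rw [coordSeq_toLp (fun j => D * q ^ j) (mem_range.mp hi)]; ring
    _ ≤ D ^ 2 * (1 / (1 - q ^ 2)) := by gcongr
    _ = D ^ 2 / (1 - q ^ 2) := by ring

end Coord

section Variational

variable {m : ℕ} {f : EuclideanSpace ℝ (Fin m) → ℝ} {c w μ b R : ℝ}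

theorem sInf_image_ball_le (hf : ∀ x, f x = chainEnergy c w μ b (m - 1) (coordSeq x))
    (hm : 1 ≤ m) {u : ℕ → ℝ} (hu : IsChainCritical c w μ b (m - 1) u)
    (hc : 0 ≤ c) (hw : 0 ≤ w) (hμ : 0 ≤ μ) (hR : ‖WithLp.toLp 2 (fun j : Fin m => u j)‖ ≤ R) :
    sInf (f '' {x | ‖x‖ ≤ R}) ≤ -(b * u 0) / 2 := by
  have hfu : f (WithLp.toLp 2 (fun j : Fin m => u j)) = -(b * u 0) / 2 := by
    rw [hf, chainEnergy_congr fun i hi => coordSeq_toLp u (by omega), hu.chainEnergy_self]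
  refine hfu ▸ csInf_le ⟨-(b * u 0) / 2, ?_⟩ ⟨_, hR, rfl⟩
  rintro _ ⟨x, -, rfl⟩
  rw [hf]
  exact hu.le_chainEnergy hc hw hμ _

theorem le_sInf_image_Fspan_ball (hf : ∀ x, f x = chainEnergy c w μ b (m - 1) (coordSeq x))
    {N : ℕ} (hN : N < m - 1) {v : ℕ → ℝ} (hv : IsChainCritical c c μ b N v)
    (hc : 0 ≤ c) (hμ : 0 ≤ μ) (hR : 0 ≤ R) :
    -(b * v 0) / 2 ≤ sInf (f '' {x | x ∈ Fspan m (N + 1) ∧ ‖x‖ ≤ R}) := by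
  refine le_csInf ⟨f 0, 0, ⟨zero_mem _, by simpa using hR⟩, rfl⟩ ?_
  rintro _ ⟨x, ⟨hx, -⟩, rfl⟩
  rw [hf, chainEnergy_of_forall_gt_eq_zero hN fun i hi => coordSeq_eq_zero_of_mem_Fspan hx hi]
  exact hv.le_chainEnergy hc hc hμ _

end Variational

/-- Optimality-gap lower bound on the subspaces `F_k` for the strongly
convex hard instance `f_SC`: for `1 ≤ k ≤ m − 1`,
`inf{f_SC(x) : x ∈ F_k, ‖x‖ ≤ R} − inf{f_SC(x) : ‖x‖ ≤ R} ≥ (μR²α/(α+1)) q^{2k}`. -/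
theorem fSC_subspace_gap
    (n m : ℕ) (hn : 2 ≤ n) (hm : 2 ≤ m)
    (L μ R : ℝ) (hμ : 0 < μ) (hR : 0 < R) (hL : 2 ≤ L / μ)
    (α q : ℝ) (hα : α = Real.sqrt (2 * (L / μ - 1) / n + 1)) (hq : q = (α - 1) / (α + 1))
    (f : EuclideanSpace ℝ (Fin m) → ℝ)
    (hf : ∀ x, f x =
      ((L - μ) / (4 * n)) *
        ((∑ l : Fin (m - 1),
            (x (Fin.castLE (by omega) l) - x (Fin.cast (by omega : m - 1 + 1 = m) l.succ)) ^ 2)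
          + (2 / (α + 1)) * (x ⟨m - 1, by omega⟩) ^ 2)
      + (μ / 2) * ‖x‖ ^ 2 - μ * R * Real.sqrt α * x ⟨0, by omega⟩) :
    ∀ k : ℕ, 1 ≤ k → k ≤ m - 1 →
      sInf (f '' {x | x ∈ Fspan m k ∧ ‖x‖ ≤ R}) - sInf (f '' {x | ‖x‖ ≤ R})
        ≥ (μ * R ^ 2 * α / (α + 1)) * q ^ (2 * k) := by
  intro k hk hkm
  obtain ⟨N, rfl⟩ : ∃ N, k = N + 1 := ⟨k - 1, by omega⟩
  have hn0 : (0 : ℝ) < n := by exact_mod_cast (by omega : 0 < n)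
  have hL' : 2 * μ ≤ L := (le_div_iff₀ hμ).mp hL
  obtain ⟨hq0, hq1, hαq, hcq⟩ := hardInstance_params hn0 hμ (by linarith) hα hq
  have h1q : 0 < 1 - q := by linarith
  set c := (L - μ) / (4 * (n : ℝ))
  set b := μ * R * √α
  have hc0 : 0 ≤ c := div_nonneg (by linarith) (by positivity)
  have hw : c * (2 / (α + 1)) = c * (1 - q) := by rw [hαq]; field_simp; ring
  have hfE : ∀ x, f x = chainEnergy c (c * (2 / (α + 1))) μ b (m - 1) (coordSeq x) :=
    fun x => (hf x).trans (hardInstance_eq_chainEnergy (by omega) _ _ _ _ x)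
  have hball : ‖WithLp.toLp 2 (fun j : Fin m => b * (1 - q) / μ * q ^ (j : ℕ))‖ ≤ R := by
    refine (sq_le_sq₀ (norm_nonneg _) hR.le).mp ((norm_sq_toLp_geom_le hq0.le hq1).trans_eq ?_)
    have : 1 - q ^ 2 ≠ 0 := by nlinarith
    rw [div_pow, mul_pow, mul_pow, mul_pow, Real.sq_sqrt (hαq ▸ by positivity), hαq]
    field_simp
    ring
  have hupper := sInf_image_ball_le hfE (by omega) (isChainCritical_geom hμ.ne' hcq hw (m - 1))
    hc0 (by rw [hw]; exact mul_nonneg hc0 (by linarith)) hμ.le hball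
  have hlower := le_sInf_image_Fspan_ball hfE (by omega)
    (isChainCritical_twoSided hμ.ne' hq0.ne' hq1.ne hcq N (by positivity)) hc0 hμ.le hR.le
  simp only [pow_zero, mul_one] at hupper hlower
  rw [ge_iff_le, hardInstance_scale hq1 hαq (hαq ▸ by positivity),
    show 2 * (N + 1) = 2 * N + 2 by ring]
  linarith [twoSided_value_gap (b := b) hμ hq0.le hq1 N]
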